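/- Let r, s ∈ (0, 1) be real numbers satisfying r > 1/2 or s < 1/2, and consider the vectors u = (r − 1/2, −1) and v = (1, s − 1/2) in the Euclidean plane ℝ². Then the angle between u and v lies strictly between arccos(4/5) and arccos(−1/√5); in particular it is strictly less than 3π/4 (i.e. 135°). -/

import Mathlib

/-!
With `a = r - 1/2` and `b = s - 1/2` in `(-1/2, 1/2)`, the cosine of the angle is
`(a - b) / √((a² + 1)(1 + b²))`. Since `arccos` is strictly decreasing, the two bounds amount
to `(a - b)² < 16/25 · (a² + 1)(1 + b²)`, and, when `a < b`, `(a - b)² < 1/5 · (a² + 1)(1 + b²)`.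
By Lagrange's identity `(a² + 1)(1 + b²) = (1 + ab)² + (a - b)²`, each of these is a product of
two factors, `4(1 + ab) ± 3(a - b)` resp. `1 + ab ± 2(b - a)`, that are positive on the square
(for the second one this is where `0 < a ∨ b < 0` enters). Finally `1/√5 < √2/2 = cos(π/4)`.
-/

/-- The vector `(a, b)` in the Euclidean plane `ℝ²`. -/
noncomputable def vec2 (a b : ℝ) : EuclideanSpace ℝ (Fin 2) :=
  (WithLp.equiv 2 (Fin 2 → ℝ)).symm ![a, b]

open Real Set InnerProductGeometry
open scoped RealInnerProductSpace

lemma inner_vec2 (a b c d : ℝ) : ⟪vec2 a b, vec2 c d⟫ = a * c + b * d := by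
  simp [vec2, PiLp.inner_apply, Fin.sum_univ_two, mul_comm]

lemma norm_vec2_sq (a b : ℝ) : ‖vec2 a b‖ ^ 2 = a ^ 2 + b ^ 2 := by
  simp [vec2, EuclideanSpace.norm_sq_eq, Fin.sum_univ_two]

section Angle

variable {V : Type*} [NormedAddCommGroup V] [InnerProductSpace ℝ V] {x y : V} {k : ℝ}

lemma sq_inner_div_norm_mul_norm_lt (h : ⟪x, y⟫ ^ 2 < k ^ 2 * (‖x‖ ^ 2 * ‖y‖ ^ 2)) :
    (⟪x, y⟫ / (‖x‖ * ‖y‖)) ^ 2 < k ^ 2 := by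
  have hpos : 0 < (‖x‖ * ‖y‖) ^ 2 := by
    rw [mul_pow]; nlinarith [sq_nonneg ⟪x, y⟫, sq_nonneg k]
  rw [div_pow, div_lt_iff₀ hpos, mul_pow]
  exact h

lemma arccos_lt_angle_of_sq_inner_lt (hk₀ : 0 ≤ k) (hk₁ : k ≤ 1)
    (h : ⟪x, y⟫ ^ 2 < k ^ 2 * (‖x‖ ^ 2 * ‖y‖ ^ 2)) : arccos k < angle x y :=
  arccos_lt_arccos (abs_le.1 (abs_real_inner_div_norm_mul_norm_le_one x y)).1
    (abs_lt_of_sq_lt_sq' (sq_inner_div_norm_mul_norm_lt h) hk₀).2 hk₁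

lemma angle_lt_arccos_neg_of_sq_inner_lt (hk₀ : 0 < k) (hk₁ : k ≤ 1)
    (h : 0 ≤ ⟪x, y⟫ ∨ ⟪x, y⟫ ^ 2 < k ^ 2 * (‖x‖ ^ 2 * ‖y‖ ^ 2)) :
    angle x y < arccos (-k) := by
  refine arccos_lt_arccos (by linarith) ?_
    (abs_le.1 (abs_real_inner_div_norm_mul_norm_le_one x y)).2
  rcases h with h | h
  · have : 0 ≤ ⟪x, y⟫ / (‖x‖ * ‖y‖) := by positivity
    linarith
  · exact (abs_lt_of_sq_lt_sq' (sq_inner_div_norm_mul_norm_lt h) hk₀.le).1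

end Angle

lemma sq_sub_lt_of_mem_Ioo {a b : ℝ} (ha : a ∈ Ioo (-1 / 2) (1 / 2))
    (hb : b ∈ Ioo (-1 / 2) (1 / 2)) :
    (a - b) ^ 2 < (4 / 5) ^ 2 * ((a ^ 2 + 1) * (1 + b ^ 2)) := by
  obtain ⟨ha₀, ha₁⟩ := ha
  obtain ⟨hb₀, hb₁⟩ := hb
  have h₁ : 0 < 4 * (1 + a * b) - 3 * (a - b) := by
    nlinarith [mul_pos (show 0 < 1 - 2 * a by linarith) (show 0 < 3 - 4 * b by linarith)]
  have h₂ : 0 < 4 * (1 + a * b) + 3 * (a - b) := by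
    nlinarith [mul_pos (show 0 < 1 + 2 * b by linarith) (show 0 < 3 + 4 * a by linarith)]
  linear_combination mul_pos h₁ h₂ / 25

lemma sq_sub_lt_of_mem_Ioo_of_lt {a b : ℝ} (ha : a ∈ Ioo (-1 / 2) (1 / 2))
    (hb : b ∈ Ioo (-1 / 2) (1 / 2)) (hab : 0 < a ∨ b < 0) (hlt : a < b) :
    (a - b) ^ 2 < (1 / 5) * ((a ^ 2 + 1) * (1 + b ^ 2)) := by
  obtain ⟨ha₀, ha₁⟩ := ha
  obtain ⟨hb₀, hb₁⟩ := hb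
  have h₁ : 0 < 1 + a * b - 2 * (b - a) := by
    rcases hab with ha | hb
    · nlinarith [mul_pos ha (show 0 < 2 + b by linarith)]
    · nlinarith [mul_pos (show 0 < 1 + 2 * a by linarith) (show 0 < 2 + b by linarith)]
  have h₂ : 0 < 1 + a * b + 2 * (b - a) := by nlinarith
  linear_combination mul_pos h₁ h₂ / 5

lemma one_div_sqrt_five_lt : 1 / √5 < √2 / 2 := by
  rw [div_lt_div_iff₀ (by positivity) two_pos, ← sqrt_mul zero_le_two, one_mul,
    lt_sqrt zero_le_two]
  norm_num

lemma arccos_neg_one_div_sqrt_five_lt : arccos (-(1 / √5)) < 3 * π / 4 := by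
  have : π / 4 < arccos (1 / √5) :=
    lt_of_not_ge fun h => (arccos_le_pi_div_four.1 h).not_gt one_div_sqrt_five_lt
  rw [arccos_neg]
  linarith

/-- For `r, s ∈ (0, 1)` with `r > 1/2` or `s < 1/2`, the angle between
`u = (r − 1/2, −1)` and `v = (1, s − 1/2)` lies strictly between `arccos(4/5)`
and `arccos(−1/√5)`; in particular it is strictly less than `3π/4`. -/
theorem stmt5 (r s : ℝ) (hr : r ∈ Set.Ioo (0 : ℝ) 1) (hs : s ∈ Set.Ioo (0 : ℝ) 1)
    (hrs : 1 / 2 < r ∨ s < 1 / 2)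
    (u v : EuclideanSpace ℝ (Fin 2))
    (hu : u = vec2 (r - 1 / 2) (-1)) (hv : v = vec2 1 (s - 1 / 2)) :
    Real.arccos (4 / 5) < InnerProductGeometry.angle u v ∧
    InnerProductGeometry.angle u v < Real.arccos (-(1 / Real.sqrt 5)) ∧
    InnerProductGeometry.angle u v < 3 * Real.pi / 4 := by
  have ha : r - 1 / 2 ∈ Ioo (-1 / 2) (1 / 2) := ⟨by linarith [hr.1], by linarith [hr.2]⟩
  have hb : s - 1 / 2 ∈ Ioo (-1 / 2) (1 / 2) := ⟨by linarith [hs.1], by linarith [hs.2]⟩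
  have hinner : ⟪u, v⟫ = (r - 1 / 2) - (s - 1 / 2) := by
    rw [hu, hv, inner_vec2]; ring
  have hnorms : ‖u‖ ^ 2 * ‖v‖ ^ 2 = ((r - 1 / 2) ^ 2 + 1) * (1 + (s - 1 / 2) ^ 2) := by
    rw [hu, hv, norm_vec2_sq, norm_vec2_sq]; ring
  have hlower : arccos (4 / 5) < angle u v :=
    arccos_lt_angle_of_sq_inner_lt (by norm_num) (by norm_num)
      (by rw [hinner, hnorms]; exact sq_sub_lt_of_mem_Ioo ha hb)
  have hupper : angle u v < arccos (-(1 / √5)) := by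
    refine angle_lt_arccos_neg_of_sq_inner_lt (by positivity)
      ((div_le_one (by positivity)).2 (one_le_sqrt.2 (by norm_num))) ?_
    rw [hinner, hnorms, div_pow, sq_sqrt (by norm_num), one_pow]
    rcases le_or_gt (s - 1 / 2) (r - 1 / 2) with hle | hlt
    · exact .inl (sub_nonneg.2 hle)
    · exact .inr (sq_sub_lt_of_mem_Ioo_of_lt ha hb
        (hrs.imp (fun h => by linarith) (fun h => by linarith)) hlt)
  exact ⟨hlower, hupper, hupper.trans arccos_neg_one_div_sqrt_five_lt⟩
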